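/- Let G be a finite p-group with derived subgroup G' of order p contained in the center. Then |G ⊗ G| ≤ |G' ⊗ G^ab| · |G^ab ⊗ G^ab|, where G^ab = G/G' and the tensor products on the right are abelian tensor products over ℤ. -/

import Mathlib

/-- Relator set for the nonabelian tensor square of `G`. -/
def tensorRels (G : Type*) [Group G] : Set (FreeGroup (G × G)) :=
  {x | (∃ g g' h : G, x = FreeGroup.of (g * g', h) *
        (FreeGroup.of (g * g' * g⁻¹, g * h * g⁻¹) * FreeGroup.of (g, h))⁻¹) ∨
       (∃ g h h' : G, x = FreeGroup.of (g, h * h') *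
        (FreeGroup.of (g, h) * FreeGroup.of (h * g * h⁻¹, h * h' * h⁻¹))⁻¹)}

/-- The nonabelian tensor square `G ⊗ G`. -/
abbrev TensorSquare (G : Type*) [Group G] :=
  FreeGroup (G × G) ⧸ Subgroup.normalClosure (tensorRels G)

/-- The generator `g ⊗ h` of the nonabelian tensor square. -/
def tElem {G : Type*} [Group G] (g h : G) : TensorSquare G :=
  QuotientGroup.mk (FreeGroup.of (g, h))

section Aux
variable {G : Type*} [Group G]

lemma tElem_rel1 (g g' h : G) :
    tElem (g * g') h = tElem (g * g' * g⁻¹) (g * h * g⁻¹) * tElem g h := by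
  have hm : (FreeGroup.of (g * g', h) *
      (FreeGroup.of (g * g' * g⁻¹, g * h * g⁻¹) * FreeGroup.of (g, h))⁻¹ : FreeGroup (G × G)) ∈
      Subgroup.normalClosure (tensorRels G) :=
    Subgroup.subset_normalClosure (Or.inl ⟨g, g', h, rfl⟩)
  have := (QuotientGroup.eq_one_iff _).mpr hm
  rw [QuotientGroup.mk_mul, QuotientGroup.mk_inv, QuotientGroup.mk_mul] at this
  exact mul_inv_eq_one.mp this

lemma tElem_rel2 (g h h' : G) :
    tElem g (h * h') = tElem g h * tElem (h * g * h⁻¹) (h * h' * h⁻¹) := by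
  have hm : (FreeGroup.of (g, h * h') *
      (FreeGroup.of (g, h) * FreeGroup.of (h * g * h⁻¹, h * h' * h⁻¹))⁻¹ : FreeGroup (G × G)) ∈
      Subgroup.normalClosure (tensorRels G) :=
    Subgroup.subset_normalClosure (Or.inr ⟨g, h, h', rfl⟩)
  have := (QuotientGroup.eq_one_iff _).mpr hm
  rw [QuotientGroup.mk_mul, QuotientGroup.mk_inv, QuotientGroup.mk_mul] at this
  exact mul_inv_eq_one.mp this

/-- The image of `g ⊗ h` in the abelianization, written additively. -/
def tau (g h : G) : Additive (Abelianization (TensorSquare G)) :=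
  Additive.ofMul (Abelianization.of (tElem g h))

lemma tau_rel1 (g g' h : G) :
    tau (g * g') h = tau (g * g' * g⁻¹) (g * h * g⁻¹) + tau g h := by
  unfold tau
  rw [tElem_rel1 g g' h, map_mul]
  rfl

lemma tau_rel2 (g h h' : G) :
    tau g (h * h') = tau g h + tau (h * g * h⁻¹) (h * h' * h⁻¹) := by
  unfold tau
  rw [tElem_rel2 g h h', map_mul]
  rfl

lemma tau_one_left (h : G) : tau (1 : G) h = 0 := by
  have := tau_rel1 (1 : G) 1 h
  simp only [mul_one, one_mul, inv_one] at this
  exact (right_eq_add.mp this)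

lemma tau_one_right (g : G) : tau g (1 : G) = 0 := by
  have := tau_rel2 g (1 : G) 1
  simp only [mul_one, one_mul, inv_one] at this
  exact (left_eq_add.mp this)

variable {c : G}

/-- L1 -/
lemma tau_cmul_left (hz : ∀ x : G, c * x = x * c) (g h : G) :
    tau (c * g) h = tau c h + tau g h := by
  have := tau_rel1 c g h
  have e1 : c * g * c⁻¹ = g := by rw [hz g]; group
  have e2 : c * h * c⁻¹ = h := by rw [hz h]; group
  rw [e1, e2] at this
  rw [this, add_comm]

/-- F1 : conjugation invariance in the second slot when the first is central -/
lemma tau_conj_right (hz : ∀ x : G, c * x = x * c) (g h : G) :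
    tau c (g * h * g⁻¹) = tau c h := by
  have h1 := tau_rel1 g c h
  have e1 : g * c * g⁻¹ = c := by rw [← hz g]; group
  rw [e1] at h1
  have h2 := tau_cmul_left hz g h
  have e2 : g * c = c * g := (hz g).symm
  rw [e2, h2] at h1
  -- h1 : tau c h + tau g h = tau c (g*h*g⁻¹) + tau g h
  exact (add_right_cancel h1.symm)

/-- L2 -/
lemma tau_mulc_left (hz : ∀ x : G, c * x = x * c) (g h : G) :
    tau (g * c) h = tau c h + tau g h := by
  have := tau_rel1 g c h
  have e1 : g * c * g⁻¹ = c := by rw [← hz g]; group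
  rw [e1, tau_conj_right hz g h] at this
  exact this

/-- L3 -/
lemma tau_cmul_right (hz : ∀ x : G, c * x = x * c) (g h : G) :
    tau g (c * h) = tau g c + tau g h := by
  have := tau_rel2 g c h
  have e1 : c * g * c⁻¹ = g := by rw [hz g]; group
  have e2 : c * h * c⁻¹ = h := by rw [hz h]; group
  rw [e1, e2] at this
  exact this

/-- F1' : conjugation invariance in the first slot when the second is central -/
lemma tau_conj_left (hz : ∀ x : G, c * x = x * c) (g h : G) :
    tau (h * g * h⁻¹) c = tau g c := by
  have h1 := tau_rel2 g h c
  have e1 : h * c * h⁻¹ = c := by rw [← hz h]; group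
  rw [e1] at h1
  have h2 := tau_cmul_right hz g h
  rw [hz h] at h2
  -- h1 : tau g (h * c) = tau g h + tau (h*g*h⁻¹) c
  -- h2 : tau g (h * c) = tau g c + tau g h
  rw [h2] at h1
  have := h1.symm
  rw [add_comm (tau g c) (tau g h)] at this
  exact (add_left_cancel this)

/-- L4 -/
lemma tau_mulc_right (hz : ∀ x : G, c * x = x * c) (g h : G) :
    tau g (h * c) = tau g c + tau g h := by
  have := tau_rel2 g h c
  have e1 : h * c * h⁻¹ = c := by rw [← hz h]; group
  rw [e1, tau_conj_left hz g h] at this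
  rw [this, add_comm]

/-- L5 -/
lemma tau_cinv_left (hz : ∀ x : G, c * x = x * c) (h : G) :
    tau c⁻¹ h = - tau c h := by
  have := tau_cmul_left hz c⁻¹ h
  rw [mul_inv_cancel, tau_one_left] at this
  exact (neg_eq_of_add_eq_zero_right this.symm).symm

/-- L6 -/
lemma tau_cinv_right (hz : ∀ x : G, c * x = x * c) (g : G) :
    tau g c⁻¹ = - tau g c := by
  have := tau_cmul_right hz g c⁻¹
  rw [mul_inv_cancel, tau_one_right] at this
  exact (neg_eq_of_add_eq_zero_right this.symm).symm

/-- L8 -/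
lemma tau_central_add_right (hz : ∀ x : G, c * x = x * c) (g h : G) :
    tau c (g * h) = tau c g + tau c h := by
  have := tau_rel2 c g h
  have e1 : g * c * g⁻¹ = c := by rw [← hz g]; group
  rw [e1, tau_conj_right hz g h] at this
  exact this

/-- L9 -/
lemma tau_central_add_left (hz : ∀ x : G, c * x = x * c) (g h : G) :
    tau (g * h) c = tau g c + tau h c := by
  have := tau_rel1 g h c
  have e1 : g * c * g⁻¹ = c := by rw [← hz g]; group
  rw [e1, tau_conj_left hz h g] at this
  rw [this, add_comm]

/-- the cocycle identity (C) -/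
lemma tau_C (a b z : G) : tau (a * b) z = tau a z + (tau b (a * z) - tau b a) := by
  have h1 := tau_rel1 a b z
  have h2 := tau_rel2 b a z
  rw [h1, eq_sub_of_add_eq' h2.symm]
  abel

end Aux

section P2
variable {G : Type*} [Group G]

/-- P2 : `y ⊗ [g,h] = (ʸg ⊗ ʸh) - (g ⊗ h)` when all commutators are central. -/
lemma tau_P2 (hcm : ∀ a b x : G, a * b * a⁻¹ * b⁻¹ * x = x * (a * b * a⁻¹ * b⁻¹))
    (g h y : G) :
    tau y (g * h * g⁻¹ * h⁻¹) = tau (y * g * y⁻¹) (y * h * y⁻¹) - tau g h := by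
  have hc' : ∀ x : G, (g * h * g⁻¹ * h⁻¹) * x = x * (g * h * g⁻¹ * h⁻¹) := hcm g h
  have hd' : ∀ x : G, (y⁻¹ * g⁻¹ * y * g) * x = x * (y⁻¹ * g⁻¹ * y * g) := by
    intro x; simpa using hcm y⁻¹ g⁻¹ x
  have he' : ∀ x : G, (g⁻¹ * y⁻¹ * g * y) * x = x * (g⁻¹ * y⁻¹ * g * y) := by
    intro x; simpa using hcm g⁻¹ y⁻¹ x
  set X := tau (y * g * y⁻¹) (y * h * y⁻¹) with hX
  have e1 : tau g (y * h) = tau g y + X := tau_rel2 g y h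
  have e2 : tau (y * g) h = tau y h + X := by
    rw [tau_C y g h, e1]; abel
  have hgy : g * y = y * g * (g⁻¹ * y⁻¹ * g * y) := by group
  have e3 : tau (g * y) h = tau (g⁻¹ * y⁻¹ * g * y) h + tau (y * g) h := by
    rw [hgy]; exact tau_mulc_left he' (y * g) h
  have e4 : tau y (g * h) = tau (g * y) h - tau g h + tau y g := by
    have := tau_C g y h; rw [this]; abel
  have hy' : g * (g⁻¹ * y * g) * g⁻¹ = y := by group
  have e5 : tau (g⁻¹ * y * g) (g * h) =
      tau (g⁻¹ * y * g) g + tau y (g * h * g⁻¹) := by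
    have := tau_rel2 (g⁻¹ * y * g) g h
    rwa [hy'] at this
  have hw : g⁻¹ * y * g = y * (y⁻¹ * g⁻¹ * y * g) := by group
  have e6 : ∀ z : G, tau (g⁻¹ * y * g) z = tau (y⁻¹ * g⁻¹ * y * g) z + tau y z := by
    intro z; rw [hw]; exact tau_mulc_left hd' y z
  have e7 : tau (y⁻¹ * g⁻¹ * y * g) (g * h) =
      tau (y⁻¹ * g⁻¹ * y * g) g + tau (y⁻¹ * g⁻¹ * y * g) h :=
    tau_central_add_right hd' g h
  have hde : y⁻¹ * g⁻¹ * y * g = (g⁻¹ * y⁻¹ * g * y)⁻¹ := by group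
  have e8 : tau (y⁻¹ * g⁻¹ * y * g) h = - tau (g⁻¹ * y⁻¹ * g * y) h := by
    rw [hde]; exact tau_cinv_left he' h
  have e9 : tau y (g * h * g⁻¹) = tau y h + X - tau g h := by
    have h5 : tau y (g * h * g⁻¹) = tau (g⁻¹ * y * g) (g * h) - tau (g⁻¹ * y * g) g := by
      rw [e5]; abel
    rw [h5, e6 (g * h), e6 g, e7, e4, e3, e2, e8]; abel
  have hch : g * h * g⁻¹ = (g * h * g⁻¹ * h⁻¹) * h := by group
  have h10 : tau y (g * h * g⁻¹ * h⁻¹) + tau y h = tau y h + X - tau g h := by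
    have := tau_cmul_right hc' y h
    rw [← hch] at this
    rw [← this, e9]
  have h11 : tau y h + tau y (g * h * g⁻¹ * h⁻¹) = tau y h + (X - tau g h) := by
    rw [add_comm (tau y h) (tau y (g * h * g⁻¹ * h⁻¹)), h10]; abel
  exact add_left_cancel h11

end P2

section Sigma
variable {G : Type*} [Group G]

/-- The swap (anti-)morphism on the tensor square, valued in the abelianization. -/
noncomputable def sigma0 : TensorSquare G →* Abelianization (TensorSquare G) :=
  QuotientGroup.lift _
    (FreeGroup.lift fun p : G × G => (Abelianization.of (tElem p.2 p.1))⁻¹)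
    (by
      apply Subgroup.normalClosure_le_normal
      intro x hx
      rcases hx with ⟨g, g', h, rfl⟩ | ⟨g, h, h', rfl⟩
      · have ht := tau_rel2 h g g'
        simp only [tau] at ht
        rw [← ofMul_mul] at ht
        have := Additive.ofMul.injective ht
        simp only [SetLike.mem_coe, MonoidHom.mem_ker, map_mul, map_inv, FreeGroup.lift_apply_of]
        rw [this]
        group
      · have ht := tau_rel1 h h' g
        simp only [tau] at ht
        rw [← ofMul_mul] at ht
        have := Additive.ofMul.injective ht
        simp only [SetLike.mem_coe, MonoidHom.mem_ker, map_mul, map_inv, FreeGroup.lift_apply_of]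
        rw [this]
        group)

/-- The swap morphism as an additive endomorphism of the abelianized tensor square. -/
noncomputable def sigmaA :
    Additive (Abelianization (TensorSquare G)) →+ Additive (Abelianization (TensorSquare G)) :=
  MonoidHom.toAdditive (Abelianization.lift sigma0)

lemma sigmaA_tau (g h : G) : sigmaA (tau g h) = - tau h g := by
  simp only [sigmaA, tau, MonoidHom.toAdditive, AddMonoidHom.coe_mk, ZeroHom.coe_mk]
  show Additive.ofMul (Abelianization.lift sigma0 (Abelianization.of (tElem g h))) = _
  rw [Abelianization.lift_apply_of]
  show Additive.ofMul ((FreeGroup.lift fun p : G × G =>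
    (Abelianization.of (tElem p.2 p.1))⁻¹) (FreeGroup.of (g, h))) = _
  rw [FreeGroup.lift_apply_of]
  rfl

end Sigma

section Sym
variable {G : Type*} [Group G]

/-- antisymmetry on central commutators -/
lemma tau_sym (hcm : ∀ a b x : G, a * b * a⁻¹ * b⁻¹ * x = x * (a * b * a⁻¹ * b⁻¹))
    (g h y : G) :
    tau (g * h * g⁻¹ * h⁻¹) y = - tau y (g * h * g⁻¹ * h⁻¹) := by
  have hc' : ∀ x : G, (g * h * g⁻¹ * h⁻¹) * x = x * (g * h * g⁻¹ * h⁻¹) := hcm g h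
  have p2 := tau_P2 hcm g h y
  have p2' := tau_P2 hcm h g y
  have happ := congrArg sigmaA p2
  simp only [map_sub, sigmaA_tau] at happ
  -- happ : - tau (g*h*g⁻¹*h⁻¹) y = - tau (y*h*y⁻¹) (y*g*y⁻¹) - - tau h g
  have hinv : h * g * h⁻¹ * g⁻¹ = (g * h * g⁻¹ * h⁻¹)⁻¹ := by group
  rw [hinv] at p2'
  have hci : tau y (g * h * g⁻¹ * h⁻¹)⁻¹ = - tau y (g * h * g⁻¹ * h⁻¹) :=
    tau_cinv_right hc' y
  rw [hci] at p2'
  -- p2' : - tau y c = tau (y*h*y⁻¹)(y*g*y⁻¹) - tau h g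
  have final : - tau (g * h * g⁻¹ * h⁻¹) y =
      - (tau (y * h * y⁻¹) (y * g * y⁻¹) - tau h g) := by
    rw [happ]; abel
  rw [← p2', neg_neg] at final
  exact neg_eq_iff_eq_neg.mp final

/-- powers in the second slot against a central element -/
lemma tau_zpow_right (c : G) (hz : ∀ x : G, c * x = x * c) (g : G) :
    ∀ k : ℤ, tau g (c ^ k) = k • tau g c := by
  have hnat : ∀ n : ℕ, tau g (c ^ n) = n • tau g c := by
    intro n
    induction n with
    | zero => simpa using tau_one_right g
    | succ n ih =>
      rw [pow_succ, tau_mulc_right hz, ih]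
      rw [succ_nsmul]; abel
  intro k
  rcases k with n | n
  · simpa using hnat n
  · have hzi : ∀ x : G, (c ^ (n + 1))⁻¹ * x = x * (c ^ (n + 1))⁻¹ := by
      intro x
      have : ∀ y : G, c ^ (n+1) * y = y * c ^ (n+1) := by
        intro y
        induction (n+1) with
        | zero => simp
        | succ m ih => rw [pow_succ, mul_assoc, hz, ← mul_assoc, ih, mul_assoc]
      calc (c ^ (n+1))⁻¹ * x = (c ^ (n+1))⁻¹ * x * (c ^ (n+1)) * (c ^ (n+1))⁻¹ := by group
        _ = (c ^ (n+1))⁻¹ * (c ^ (n+1)) * x * (c ^ (n+1))⁻¹ := by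
            rw [mul_assoc ((c ^ (n+1))⁻¹) x (c ^ (n+1)), ← this x, ← mul_assoc]
        _ = x * (c ^ (n+1))⁻¹ := by group
    have hcn : ∀ x : G, (c ^ (n + 1)) * x = x * (c ^ (n + 1)) := by
      intro x
      have := hzi x⁻¹
      calc c ^ (n+1) * x = (x⁻¹ * (c^(n+1))⁻¹)⁻¹ := by group
        _ = ((c^(n+1))⁻¹ * x⁻¹)⁻¹ := by rw [← this]
        _ = x * c ^ (n+1) := by group
    rw [zpow_negSucc, tau_cinv_right hcn g, hnat (n+1), Int.negSucc_eq, neg_smul]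
    norm_cast

/-- powers in the first slot when central -/
lemma tau_zpow_left (c : G) (hz : ∀ x : G, c * x = x * c) (h : G) :
    ∀ k : ℤ, tau (c ^ k) h = k • tau c h := by
  have hnat : ∀ n : ℕ, tau (c ^ n) h = n • tau c h := by
    intro n
    induction n with
    | zero => simpa using tau_one_left h
    | succ n ih =>
      rw [pow_succ, tau_mulc_left (c := c) hz (c ^ n) h, ih]
      rw [succ_nsmul]; abel
  intro k
  rcases k with n | n
  · simpa using hnat n
  · have hcn : ∀ x : G, (c ^ (n + 1)) * x = x * (c ^ (n + 1)) := by
      intro x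
      induction (n+1) with
      | zero => simp
      | succ m ih => rw [pow_succ, mul_assoc, hz, ← mul_assoc, ih, mul_assoc]
    rw [zpow_negSucc, tau_cinv_left hcn h, hnat (n+1), Int.negSucc_eq, neg_smul]
    norm_cast

end Sym

section Comm
variable {G : Type*} [Group G]

lemma tElem_commute (hcm : ∀ a b x : G, a * b * a⁻¹ * b⁻¹ * x = x * (a * b * a⁻¹ * b⁻¹))
    (g h u v : G) : Commute (tElem g h) (tElem u v) := by
  -- first, commute with conjugated generators
  have key : ∀ x y : G,
      Commute (tElem g h) (tElem ((h*g)*x*(h*g)⁻¹) ((h*g)*y*(h*g)⁻¹)) := by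
    intro x y
    have hk : ∀ z : G, (g⁻¹*h⁻¹*g*h) * z = z * (g⁻¹*h⁻¹*g*h) := by
      intro z; simpa using hcm g⁻¹ h⁻¹ z
    have hgh : ∀ z : G, (g*h)*z*(g*h)⁻¹ = (h*g)*z*(h*g)⁻¹ := by
      intro z
      calc (g*h)*z*(g*h)⁻¹
          = (h*g) * ((g⁻¹*h⁻¹*g*h)*z*(g⁻¹*h⁻¹*g*h)⁻¹) * (h*g)⁻¹ := by group
        _ = (h*g) * (z*(g⁻¹*h⁻¹*g*h)*(g⁻¹*h⁻¹*g*h)⁻¹) * (h*g)⁻¹ := by rw [hk z]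
        _ = (h*g)*z*(h*g)⁻¹ := by group
    set P := tElem (g*x*g⁻¹) (g*h*g⁻¹) with hP
    set Q := tElem g h with hQ
    set S := tElem (h*g*h⁻¹) (h*y*h⁻¹) with hS
    set R := tElem ((h*g)*x*(h*g)⁻¹) ((h*g)*y*(h*g)⁻¹) with hR
    have a1 := tElem_rel2 (g*x) h y
    have a2 := tElem_rel1 g x h
    have a3 := tElem_rel1 (h*g*h⁻¹) (h*x*h⁻¹) (h*y*h⁻¹)
    have e2 : (h*g*h⁻¹)*(h*x*h⁻¹)*(h*g*h⁻¹)⁻¹ = (h*g)*x*(h*g)⁻¹ := by group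
    have e3 : (h*g*h⁻¹)*(h*y*h⁻¹)*(h*g*h⁻¹)⁻¹ = (h*g)*y*(h*g)⁻¹ := by group
    have e1 : (h*g*h⁻¹)*(h*x*h⁻¹) = h*(g*x)*h⁻¹ := by group
    rw [e2, e3, e1] at a3
    have pathA : tElem (g*x) (h*y) = P * Q * (R * S) := by
      rw [a1, a2, a3]
    have b1 := tElem_rel1 g x (h*y)
    have b2 := tElem_rel2 g h y
    have b3 := tElem_rel2 (g*x*g⁻¹) (g*h*g⁻¹) (g*y*g⁻¹)
    have f2 : (g*h*g⁻¹)*(g*x*g⁻¹)*(g*h*g⁻¹)⁻¹ = (h*g)*x*(h*g)⁻¹ := by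
      rw [show (g*h*g⁻¹)*(g*x*g⁻¹)*(g*h*g⁻¹)⁻¹ = (g*h)*x*(g*h)⁻¹ from by group]
      exact hgh x
    have f3 : (g*h*g⁻¹)*(g*y*g⁻¹)*(g*h*g⁻¹)⁻¹ = (h*g)*y*(h*g)⁻¹ := by
      rw [show (g*h*g⁻¹)*(g*y*g⁻¹)*(g*h*g⁻¹)⁻¹ = (g*h)*y*(g*h)⁻¹ from by group]
      exact hgh y
    have f1 : (g*h*g⁻¹)*(g*y*g⁻¹) = g*(h*y)*g⁻¹ := by group
    rw [f2, f3, f1] at b3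
    have pathB : tElem (g*x) (h*y) = P * R * (Q * S) := by
      rw [b1, b2, b3]
    have heq : P * Q * (R * S) = P * R * (Q * S) := pathA.symm.trans pathB
    have h2 : Q * R = R * Q := by
      rw [mul_assoc P Q (R*S), mul_assoc P R (Q*S)] at heq
      have h4 := mul_left_cancel heq
      rw [← mul_assoc, ← mul_assoc] at h4
      exact mul_right_cancel h4
    exact h2
  have hx : (h*g)*((h*g)⁻¹*u*(h*g))*(h*g)⁻¹ = u := by group
  have hy : (h*g)*((h*g)⁻¹*v*(h*g))*(h*g)⁻¹ = v := by group
  have := key ((h*g)⁻¹*u*(h*g)) ((h*g)⁻¹*v*(h*g))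
  rwa [hx, hy] at this

lemma tensorSquare_gen :
    Subgroup.closure (Set.range fun p : G × G => tElem p.1 p.2) = ⊤ := by
  rw [Subgroup.eq_top_iff']
  intro x
  induction x using QuotientGroup.induction_on with
  | H w =>
    induction w using FreeGroup.induction_on with
    | C1 => exact one_mem _
    | of p => exact Subgroup.subset_closure ⟨p, rfl⟩
    | inv_of p ih =>
      rw [QuotientGroup.mk_inv]
      exact inv_mem ih
    | mul a b iha ihb =>
      rw [QuotientGroup.mk_mul]
      exact mul_mem iha ihb

lemma tensorSquare_comm (hcm : ∀ a b x : G, a * b * a⁻¹ * b⁻¹ * x = x * (a * b * a⁻¹ * b⁻¹))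
    (s t : TensorSquare G) : s * t = t * s := by
  have hs : s ∈ Subgroup.closure (Set.range fun p : G × G => tElem p.1 p.2) := by
    rw [tensorSquare_gen]; trivial
  have ht : t ∈ Subgroup.closure (Set.range fun p : G × G => tElem p.1 p.2) := by
    rw [tensorSquare_gen]; trivial
  refine Subgroup.closure_induction₂
    (p := fun x y _ _ => Commute x y) ?_ ?_ ?_ ?_ ?_ ?_ ?_ hs ht
  · rintro x y ⟨p, rfl⟩ ⟨q, rfl⟩
    exact tElem_commute hcm p.1 p.2 q.1 q.2
  · intro x _; exact Commute.one_left x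
  · intro x _; exact Commute.one_right x
  · intro x y z _ _ _ h1 h2; exact h1.mul_left h2
  · intro y z x _ _ _ h1 h2; exact h1.mul_right h2
  · intro x y _ _ h; exact h.inv_left
  · intro x y _ _ h; exact h.inv_right

end Comm

section FiniteTensor
open scoped TensorProduct

lemma finite_tensorProduct (M N : Type*) [AddCommGroup M] [AddCommGroup N]
    [Finite M] [Finite N] : Finite (TensorProduct ℤ M N) := by
  classical
  cases nonempty_fintype N
  have hsurj : Function.Surjective
      (fun fm : N → M => ∑ n : N, fm n ⊗ₜ[ℤ] n) := by
    intro x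
    induction x using TensorProduct.induction_on with
    | zero =>
      refine ⟨0, ?_⟩
      simp [TensorProduct.zero_tmul]
    | tmul m n =>
      refine ⟨Pi.single n m, ?_⟩
      show (∑ n' : N, Pi.single n m n' ⊗ₜ[ℤ] n') = m ⊗ₜ[ℤ] n
      rw [Finset.sum_eq_single n]
      · simp
      · intro b _ hb
        rw [Pi.single_eq_of_ne hb, TensorProduct.zero_tmul]
      · intro hn; exact absurd (Finset.mem_univ n) hn
    | add x y hx hy =>
      obtain ⟨a, rfl⟩ := hx
      obtain ⟨b, rfl⟩ := hy
      refine ⟨a + b, ?_⟩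
      simp [TensorProduct.add_tmul, Finset.sum_add_distrib]
  exact Finite.of_surjective _ hsurj

end FiniteTensor

section Helper
variable {G : Type*} [Group G]

lemma ab_of_tau_add {g1 h1 g2 h2 g3 h3 : G}
    (H : tau g1 h1 = tau g2 h2 + tau g3 h3) :
    Abelianization.of (tElem g1 h1) =
      Abelianization.of (tElem g2 h2) * Abelianization.of (tElem g3 h3) := by
  have := congrArg Additive.toMul H
  simpa [tau] using this

/-- additive generation of the abelianized tensor square by the `tau`s -/
lemma tau_gen : AddSubgroup.closure
    (Set.range fun p : G × G => tau p.1 p.2) = ⊤ := by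
  rw [AddSubgroup.eq_top_iff']
  have key : ∀ w : FreeGroup (G × G),
      Additive.ofMul (Abelianization.of ((QuotientGroup.mk w : TensorSquare G))) ∈
        AddSubgroup.closure (Set.range fun p : G × G => tau p.1 p.2) := by
    intro w
    induction w using FreeGroup.induction_on with
    | C1 =>
      have h1 : Additive.ofMul (Abelianization.of ((QuotientGroup.mk (1 : FreeGroup (G × G)) : TensorSquare G))) =
          (0 : Additive (Abelianization (TensorSquare G))) := by
        rw [QuotientGroup.mk_one, map_one]; rfl
      rw [h1]; exact zero_mem _
    | of p => exact AddSubgroup.subset_closure ⟨p, rfl⟩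
    | inv_of p ih =>
      show Additive.ofMul (Abelianization.of ((QuotientGroup.mk ((FreeGroup.of p)⁻¹) : TensorSquare G))) ∈ _
      have h1 : Additive.ofMul (Abelianization.of ((QuotientGroup.mk ((FreeGroup.of p)⁻¹) : TensorSquare G))) =
          - Additive.ofMul (Abelianization.of ((QuotientGroup.mk (FreeGroup.of p) : TensorSquare G))) := by
        rw [QuotientGroup.mk_inv, map_inv]; rfl
      rw [h1]
      exact neg_mem ih
    | mul a b iha ihb =>
      have h1 : Additive.ofMul (Abelianization.of ((QuotientGroup.mk (a * b) : TensorSquare G))) =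
          Additive.ofMul (Abelianization.of ((QuotientGroup.mk a : TensorSquare G))) +
          Additive.ofMul (Abelianization.of ((QuotientGroup.mk b : TensorSquare G))) := by
        rw [QuotientGroup.mk_mul, map_mul]; rfl
      rw [h1]
      exact add_mem iha ihb
  intro x
  obtain ⟨t, ht⟩ : ∃ t : TensorSquare G, Abelianization.of t = Additive.toMul x :=
    QuotientGroup.induction_on (Additive.toMul x) (fun z => ⟨z, rfl⟩)
  obtain ⟨w, rfl⟩ : ∃ w : FreeGroup (G × G), (QuotientGroup.mk w : TensorSquare G) = t :=
    QuotientGroup.induction_on t (fun z => ⟨z, rfl⟩)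
  have hx2 : x = Additive.ofMul (Abelianization.of ((QuotientGroup.mk w : TensorSquare G))) := by
    rw [ht]; rfl
  rw [hx2]; exact key w

end Helper

open scoped IsMulCommutative

set_option maxHeartbeats 2000000 in
/-- If `G` is a finite `p`-group whose derived subgroup has order `p` and is central, then
`|G ⊗ G| ≤ |G' ⊗ℤ G^ab| · |G^ab ⊗ℤ G^ab|`. -/
theorem card_tensorSquare_le_abelian_bound (p : ℕ) (hp : p.Prime)
    (G : Type*) [Group G] [Finite G] (hpG : IsPGroup p G)
    (hd : Nat.card (commutator G) = p) (hc : commutator G ≤ Subgroup.center G)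
    [IsMulCommutative (commutator G)] :
    Nat.card (TensorSquare G) ≤
      Nat.card (TensorProduct ℤ (Additive (commutator G)) (Additive (Abelianization G))) *
      Nat.card (TensorProduct ℤ (Additive (Abelianization G)) (Additive (Abelianization G))) := by
  classical
  -- centrality facts
  have hzc : ∀ c : G, c ∈ commutator G → ∀ x : G, c * x = x * c := by
    intro c hcmem x
    exact ((Subgroup.mem_center_iff.mp (hc hcmem)) x).symm
  have hcomm_mem : ∀ a b : G, a * b * a⁻¹ * b⁻¹ ∈ commutator G := by
    intro a b
    open commutatorElement in
    have h1 : ⁅a, b⁆ ∈ commutator G := by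
      rw [commutator_def]
      exact Subgroup.commutator_mem_commutator (Subgroup.mem_top a) (Subgroup.mem_top b)
    rwa [commutatorElement_def] at h1
  have hcm : ∀ a b x : G, a * b * a⁻¹ * b⁻¹ * x = x * (a * b * a⁻¹ * b⁻¹) :=
    fun a b x => hzc _ (hcomm_mem a b) x
  -- a generating commutator
  have hzex : ∃ a b : G, a * b * a⁻¹ * b⁻¹ ≠ 1 := by
    by_contra hno
    push_neg at hno
    have hbot : commutator G = ⊥ := by
      rw [commutator_def, Subgroup.commutator_eq_bot_iff_le_centralizer]
      intro x _
      rw [Subgroup.mem_centralizer_iff]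
      intro y _
      calc y * x = (y * x * y⁻¹ * x⁻¹) * (x * y) := by group
        _ = 1 * (x * y) := by rw [hno y x]
        _ = x * y := one_mul _
    rw [hbot] at hd
    rw [Subgroup.card_bot] at hd
    exact hp.ne_one hd.symm
  obtain ⟨a0, b0, hzne⟩ := hzex
  set z : G := a0 * b0 * a0⁻¹ * b0⁻¹ with hzdef
  have hzmem : z ∈ commutator G := hcomm_mem a0 b0
  have hzc' : ∀ x : G, z * x = x * z := hzc z hzmem
  -- every element of the derived subgroup is a power of z
  have hpow : ∀ c : G, c ∈ commutator G → ∃ k : ℤ, c = z ^ k := by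
    intro c hcmem
    have hord : orderOf (⟨z, hzmem⟩ : commutator G) = p := by
      have hdvd : orderOf (⟨z, hzmem⟩ : commutator G) ∣ p := by
        rw [← hd]; exact orderOf_dvd_natCard _
      rcases (Nat.Prime.eq_one_or_self_of_dvd hp _ hdvd) with h1 | h1
      · exfalso
        have h2 := orderOf_eq_one_iff.mp h1
        exact hzne (Subtype.ext_iff.mp h2)
      · exact h1
    have htop : Subgroup.zpowers (⟨z, hzmem⟩ : commutator G) = ⊤ := by
      apply Subgroup.eq_top_of_card_eq
      rw [Nat.card_zpowers, hord, hd]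
    have hmem : (⟨c, hcmem⟩ : commutator G) ∈
        Subgroup.zpowers (⟨z, hzmem⟩ : commutator G) := by
      rw [htop]; trivial
    obtain ⟨k, hk⟩ := Subgroup.mem_zpowers_iff.mp hmem
    refine ⟨k, ?_⟩
    have := congrArg (Subtype.val) hk
    simpa using this.symm
  -- the first bilinear map
  have tau_mul_right : ∀ (c : G), c ∈ commutator G → ∀ h h' : G,
      Abelianization.of (tElem c (h * h')) =
        Abelianization.of (tElem c h) * Abelianization.of (tElem c h') :=
    fun c hcmem h h' => ab_of_tau_add (tau_central_add_right (hzc c hcmem) h h')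
  set χ : (commutator G) → (Abelianization G →* Abelianization (TensorSquare G)) :=
    fun c => Abelianization.lift (MonoidHom.mk'
      (fun h => Abelianization.of (tElem (↑c) h))
      (fun h h' => tau_mul_right ↑c c.2 h h')) with hχ
  have χ_of : ∀ (c : (commutator G)) (h : G),
      χ c (Abelianization.of h) = Abelianization.of (tElem (↑c) h) := fun c h => rfl
  have χ_mul : ∀ c c' : (commutator G), χ (c * c') = χ c * χ c' := by
    intro c c'
    apply Abelianization.hom_ext
    refine MonoidHom.ext fun h => ?_
    show χ (c * c') (Abelianization.of h) = (χ c * χ c') (Abelianization.of h)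
    rw [χ_of]
    have : ((↑(c * c') : G)) = (↑c : G) * (↑c' : G) := rfl
    rw [this]
    exact ab_of_tau_add (tau_cmul_left (hzc ↑c c.2) (↑c' : G) h)
  have χ_one : χ 1 = 1 := by
    have h1 := χ_mul 1 1
    rw [one_mul] at h1
    exact (left_eq_mul.mp h1)
  set f1 : Additive (commutator G) →+
      (Additive (Abelianization G) →+ Additive (Abelianization (TensorSquare G))) :=
    { toFun := fun c => MonoidHom.toAdditive (χ (Additive.toMul c)),
      map_zero' := by
        refine AddMonoidHom.ext fun b => ?_
        show Additive.ofMul (χ 1 (Additive.toMul b)) = 0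
        rw [χ_one]; rfl,
      map_add' := by
        intro c c'
        refine AddMonoidHom.ext fun b => ?_
        show Additive.ofMul (χ (Additive.toMul c * Additive.toMul c') (Additive.toMul b)) = _
        rw [χ_mul]; rfl } with hf1
  set g1 : Additive (commutator G) →+
      (Additive (Abelianization G) →ₗ[ℤ] Additive (Abelianization (TensorSquare G))) :=
    { toFun := fun c => (f1 c).toIntLinearMap,
      map_zero' := by
        refine LinearMap.ext fun b => ?_
        show (f1 0) b = 0
        rw [f1.map_zero]; rfl,
      map_add' := by
        intro x y
        refine LinearMap.ext fun b => ?_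
        show (f1 (x + y)) b = f1 x b + f1 y b
        rw [f1.map_add]; rfl } with hg1
  set Φ₁ := TensorProduct.lift g1.toIntLinearMap with hΦ₁
  have Φ₁_tmul : ∀ (c : (commutator G)) (h : G),
      Φ₁ (Additive.ofMul c ⊗ₜ[ℤ] Additive.ofMul (Abelianization.of h)) = tau (↑c) h := by
    intro c h
    rw [hΦ₁, TensorProduct.lift.tmul]
    rfl
  set N : AddSubgroup (Additive (Abelianization (TensorSquare G))) :=
    Φ₁.toAddMonoidHom.range with hN
  have mem1 : ∀ (c : G), c ∈ commutator G → ∀ h : G, tau c h ∈ N := by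
    intro c hcmem h
    exact ⟨Additive.ofMul (⟨c, hcmem⟩ : (commutator G)) ⊗ₜ[ℤ]
      Additive.ofMul (Abelianization.of h), Φ₁_tmul ⟨c, hcmem⟩ h⟩
  have tau_sym_z : ∀ y : G, tau z y = - tau y z := by
    intro y
    exact tau_sym hcm a0 b0 y
  have mem2 : ∀ (c : G), c ∈ commutator G → ∀ y : G, tau y c ∈ N := by
    intro c hcmem y
    obtain ⟨k, rfl⟩ := hpow c hcmem
    rw [tau_zpow_right z hzc' y k]
    have h1 : tau y z = - tau z y := by rw [tau_sym_z y, neg_neg]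
    rw [h1]
    exact AddSubgroup.zsmul_mem _ (neg_mem (mem1 z hzmem y)) k
  have W : ∀ u v d e : G, d ∈ commutator G → e ∈ commutator G →
      tau (u * d) (v * e) - tau u v ∈ N := by
    intro u v d e hdm hem
    rw [tau_mulc_left (hzc d hdm) u (v * e), tau_mulc_right (hzc e hem) u v]
    have h1 : tau d (v * e) + (tau u e + tau u v) - tau u v =
        tau d (v * e) + tau u e := by abel
    rw [h1]
    exact add_mem (mem1 d hdm (v * e)) (mem2 e hem u)
  -- the quotient
  set q : Additive (Abelianization (TensorSquare G)) →+
      (Additive (Abelianization (TensorSquare G)) ⧸ N) := QuotientAddGroup.mk' N with hq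
  have qW : ∀ u v d e : G, d ∈ commutator G → e ∈ commutator G →
      q (tau (u * d) (v * e)) = q (tau u v) := by
    intro u v d e hdm hem
    rw [hq]
    show QuotientAddGroup.mk _ = QuotientAddGroup.mk _
    rw [QuotientAddGroup.eq_iff_sub_mem]
    exact W u v d e hdm hem
  have conjmem : ∀ g h : G, (g⁻¹ * h * g * h⁻¹) ∈ commutator G := by
    intro g h
    have := hcomm_mem g⁻¹ h
    simpa using this
  have qc : ∀ g h' h : G, q (tau (h * g * h⁻¹) (h * h' * h⁻¹)) = q (tau g h') := by
    intro g h' h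
    have e1 : h * g * h⁻¹ = g * (g⁻¹ * h * g * h⁻¹) := by group
    have e2 : h * h' * h⁻¹ = h' * (h'⁻¹ * h * h' * h⁻¹) := by group
    rw [e1, e2]
    exact qW g h' _ _ (conjmem g h) (conjmem h' h)
  have qmul2 : ∀ g h h' : G, q (tau g (h * h')) = q (tau g h) + q (tau g h') := by
    intro g h h'
    rw [tau_rel2 g h h', map_add, qc g h' h]
  have qmul1 : ∀ g g' h : G, q (tau (g * g') h) = q (tau g h) + q (tau g' h) := by
    intro g g' h
    rw [tau_rel1 g g' h, map_add, qc g' h g, add_comm]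
  -- the second bilinear map
  set χ₂ : G → (Abelianization G →*
      Multiplicative (Additive (Abelianization (TensorSquare G)) ⧸ N)) :=
    fun g => Abelianization.lift (MonoidHom.mk'
      (fun h => Multiplicative.ofAdd (q (tau g h)))
      (fun h h' => congrArg Multiplicative.ofAdd (qmul2 g h h'))) with hχ₂
  have χ₂_of : ∀ g h : G, χ₂ g (Abelianization.of h) =
      Multiplicative.ofAdd (q (tau g h)) := fun g h => rfl
  have χ₂_mul : ∀ g g' : G, χ₂ (g * g') = χ₂ g * χ₂ g' := by
    intro g g'
    apply Abelianization.hom_ext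
    refine MonoidHom.ext fun h => ?_
    show χ₂ (g * g') (Abelianization.of h) =
      (χ₂ g * χ₂ g') (Abelianization.of h)
    rw [χ₂_of]
    exact congrArg Multiplicative.ofAdd (qmul1 g g' h)
  set Θ : Abelianization G →* (Abelianization G →*
      Multiplicative (Additive (Abelianization (TensorSquare G)) ⧸ N)) :=
    Abelianization.lift (MonoidHom.mk' χ₂ χ₂_mul) with hΘ
  have Θ_of : ∀ g : G, Θ (Abelianization.of g) = χ₂ g := fun g => rfl
  have Θ_one : Θ 1 = 1 := Θ.map_one
  set f2 : Additive (Abelianization G) →+ (Additive (Abelianization G) →+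
      (Additive (Abelianization (TensorSquare G)) ⧸ N)) :=
    { toFun := fun b => MonoidHom.toAdditiveLeft (Θ (Additive.toMul b)),
      map_zero' := by
        refine AddMonoidHom.ext fun b' => ?_
        show Multiplicative.toAdd ((Θ 1) (Additive.toMul b')) = 0
        rw [Θ_one]; rfl,
      map_add' := by
        intro b b'
        refine AddMonoidHom.ext fun b'' => ?_
        show Multiplicative.toAdd
          ((Θ (Additive.toMul b * Additive.toMul b')) (Additive.toMul b'')) = _
        rw [Θ.map_mul]; rfl } with hf2
  set g2 : Additive (Abelianization G) →+ (Additive (Abelianization G) →ₗ[ℤ]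
      (Additive (Abelianization (TensorSquare G)) ⧸ N)) :=
    { toFun := fun b => (f2 b).toIntLinearMap,
      map_zero' := by
        refine LinearMap.ext fun b' => ?_
        show (f2 0) b' = 0
        rw [f2.map_zero]; rfl,
      map_add' := by
        intro x y
        refine LinearMap.ext fun b' => ?_
        show (f2 (x + y)) b' = f2 x b' + f2 y b'
        rw [f2.map_add]; rfl } with hg2
  set Φ₂ := TensorProduct.lift g2.toIntLinearMap with hΦ₂
  have Φ₂_tmul : ∀ g h : G,
      Φ₂ (Additive.ofMul (Abelianization.of g) ⊗ₜ[ℤ]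
        Additive.ofMul (Abelianization.of h)) = q (tau g h) := by
    intro g h
    rw [hΦ₂, TensorProduct.lift.tmul]
    rfl
  have hsurj2 : Function.Surjective ⇑Φ₂ := by
    intro y
    obtain ⟨x, rfl⟩ := QuotientAddGroup.mk'_surjective N y
    have hx : x ∈ AddSubgroup.closure (Set.range fun p : G × G => tau p.1 p.2) := by
      rw [tau_gen]; trivial
    refine AddSubgroup.closure_induction ?_ ?_ ?_ ?_ hx
    · rintro w ⟨pp, rfl⟩
      exact ⟨Additive.ofMul (Abelianization.of pp.1) ⊗ₜ[ℤ]
        Additive.ofMul (Abelianization.of pp.2), Φ₂_tmul pp.1 pp.2⟩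
    · exact ⟨0, by simp⟩
    · rintro w w' _ _ ⟨t, ht⟩ ⟨t', ht'⟩
      exact ⟨t + t', by rw [map_add, ht, ht', map_add]⟩
    · rintro w _ ⟨t, ht⟩
      exact ⟨-t, by rw [map_neg, ht, map_neg]⟩
  -- finiteness
  have finT1 : Finite (TensorProduct ℤ (Additive (commutator G))
      (Additive (Abelianization G))) := finite_tensorProduct _ _
  have finT2 : Finite (TensorProduct ℤ (Additive (Abelianization G))
      (Additive (Abelianization G))) := finite_tensorProduct _ _
  have finN : Finite N := by
    have h1 : (Set.range ⇑Φ₁.toAddMonoidHom).Finite := Set.finite_range _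
    exact h1.to_subtype
  have finQ : Finite (Additive (Abelianization (TensorSquare G)) ⧸ N) :=
    Finite.of_surjective _ hsurj2
  have finTA : Finite (Additive (Abelianization (TensorSquare G))) :=
    Finite.of_equiv _ (AddSubgroup.addGroupEquivQuotientProdAddSubgroup (s := N)).symm
  have hcard : Nat.card (Additive (Abelianization (TensorSquare G))) =
      Nat.card (Additive (Abelianization (TensorSquare G)) ⧸ N) * Nat.card N :=
    AddSubgroup.card_eq_card_quotient_mul_card_addSubgroup N
  have hb1 : Nat.card N ≤ Nat.card (TensorProduct ℤ (Additive (commutator G))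
      (Additive (Abelianization G))) := by
    have hs : Function.Surjective ⇑Φ₁.toAddMonoidHom.rangeRestrict :=
      AddMonoidHom.rangeRestrict_surjective _
    exact Nat.card_le_card_of_surjective _ hs
  have hb2 : Nat.card (Additive (Abelianization (TensorSquare G)) ⧸ N) ≤
      Nat.card (TensorProduct ℤ (Additive (Abelianization G))
        (Additive (Abelianization G))) :=
    Nat.card_le_card_of_surjective _ hsurj2
  -- the tensor square is abelian, so it has the same cardinality as its abelianization
  have hbot : commutator (TensorSquare G) = ⊥ := by
    rw [commutator_def, Subgroup.commutator_eq_bot_iff_le_centralizer]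
    intro s _
    rw [Subgroup.mem_centralizer_iff]
    intro t _
    exact tensorSquare_comm hcm t s
  have hbij : Function.Bijective
      (Abelianization.of : TensorSquare G → Abelianization (TensorSquare G)) := by
    constructor
    · intro s t hst
      have h2 : (QuotientGroup.mk s : Abelianization (TensorSquare G)) =
          (QuotientGroup.mk t : Abelianization (TensorSquare G)) := hst
      have h3 := QuotientGroup.eq.mp h2
      rw [hbot] at h3
      have h4 : s⁻¹ * t = 1 := Subgroup.mem_bot.mp h3
      exact inv_mul_eq_one.mp h4
    · intro y; exact QuotientGroup.induction_on y fun t => ⟨t, rfl⟩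
  have hc1 : Nat.card (TensorSquare G) =
      Nat.card (Additive (Abelianization (TensorSquare G))) := by
    have e1 : Nat.card (TensorSquare G) =
        Nat.card (Abelianization (TensorSquare G)) := Nat.card_eq_of_bijective _ hbij
    exact e1.trans (Nat.card_congr Additive.ofMul)
  calc Nat.card (TensorSquare G)
      = Nat.card (Additive (Abelianization (TensorSquare G)) ⧸ N) * Nat.card N := by
        rw [hc1, hcard]
    _ ≤ Nat.card (TensorProduct ℤ (Additive (Abelianization G))
          (Additive (Abelianization G))) *
        Nat.card (TensorProduct ℤ (Additive (commutator G))
          (Additive (Abelianization G))) := Nat.mul_le_mul hb2 hb1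
    _ = Nat.card (TensorProduct ℤ (Additive (commutator G))
          (Additive (Abelianization G))) *
        Nat.card (TensorProduct ℤ (Additive (Abelianization G))
          (Additive (Abelianization G))) := mul_comm _ _
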